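/- Let T be a tree on n vertices with n ≥ 3. Then σ(T) ≤ (n − 1)(n − 2)², and equality holds if and only if T is isomorphic to the star S_n on n vertices. -/

import Mathlib

open Finset

/-- Vertex degree, with classical decidability of adjacency. -/
noncomputable def deg {V : Type*} [Fintype V] (G : SimpleGraph V) (v : V) : ℕ :=
  letI : DecidableRel G.Adj := Classical.decRel _
  G.degree v

/-- The sigma index `σ(G) = Σ_{uv ∈ E(G)} (d(u) − d(v))²`. -/
noncomputable def sigmaIndex {V : Type*} [Fintype V] (G : SimpleGraph V) : ℤ :=
  letI := Classical.decEq V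
  letI : DecidableRel G.Adj := Classical.decRel _
  ∑ e ∈ G.edgeFinset,
    Sym2.lift ⟨fun u v => ((deg G u : ℤ) - (deg G v : ℤ)) ^ 2, fun u v => by ring⟩ e

/-- The Albertson index `irr(G) = Σ_{uv ∈ E(G)} |d(u) − d(v)|`. -/
noncomputable def albertson {V : Type*} [Fintype V] (G : SimpleGraph V) : ℤ :=
  letI := Classical.decEq V
  letI : DecidableRel G.Adj := Classical.decRel _
  ∑ e ∈ G.edgeFinset,
    Sym2.lift ⟨fun u v => |(deg G u : ℤ) - (deg G v : ℤ)|, fun u v => by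
      simp [abs_sub_comm]⟩ e

section Aux

variable {V : Type*} [Fintype V]

/-- `G` is a star with center `c`. -/
def IsStarAt (G : SimpleGraph V) (c : V) : Prop :=
  ∀ u v, G.Adj u v ↔ (u = c ∧ v ≠ c) ∨ (v = c ∧ u ≠ c)

lemma deg_eq_degree (G : SimpleGraph V) [DecidableRel G.Adj] (v : V) :
    deg G v = G.degree v := by
  unfold deg
  congr!

lemma sigmaIndex_eq_sum (G : SimpleGraph V) [DecidableEq V] [DecidableRel G.Adj] :
    sigmaIndex G = ∑ e ∈ G.edgeFinset,
      Sym2.lift ⟨fun u v => ((G.degree u : ℤ) - (G.degree v : ℤ)) ^ 2,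
        fun u v => by ring⟩ e := by
  unfold sigmaIndex
  have hE : ∀ (i1 i2 : Fintype G.edgeSet),
      @SimpleGraph.edgeFinset _ G i1 = @SimpleGraph.edgeFinset _ G i2 := by
    intro i1 i2
    rw [Subsingleton.elim i1 i2]
  rw [hE _ _]
  refine Finset.sum_congr rfl fun e _ => ?_
  induction e using Sym2.ind with
  | _ u v => simp [deg_eq_degree]

lemma IsStarAt.neighborFinset_center [DecidableEq V] {G : SimpleGraph V}
    [DecidableRel G.Adj] {c : V} (h : IsStarAt G c) :
    G.neighborFinset c = univ.erase c := by
  ext v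
  simp only [SimpleGraph.mem_neighborFinset, mem_erase, mem_univ, and_true]
  rw [h]
  constructor
  · rintro (⟨_, hv⟩ | ⟨rfl, hc⟩)
    · exact hv
    · exact absurd rfl hc
  · intro hv
    exact Or.inl ⟨rfl, hv⟩

lemma IsStarAt.degree_center [DecidableEq V] {G : SimpleGraph V}
    [DecidableRel G.Adj] {c : V} (h : IsStarAt G c) :
    G.degree c = Fintype.card V - 1 := by
  rw [← SimpleGraph.card_neighborFinset_eq_degree, h.neighborFinset_center,
    card_erase_of_mem (mem_univ c), card_univ]

lemma IsStarAt.degree_leaf [DecidableEq V] {G : SimpleGraph V}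
    [DecidableRel G.Adj] {c v : V} (h : IsStarAt G c) (hv : v ≠ c) :
    G.degree v = 1 := by
  rw [← SimpleGraph.card_neighborFinset_eq_degree]
  have hns : G.neighborFinset v = {c} := by
    ext u
    simp only [SimpleGraph.mem_neighborFinset, mem_singleton]
    rw [h]
    constructor
    · rintro (⟨hvc, _⟩ | ⟨rfl, _⟩)
      · exact absurd hvc hv
      · rfl
    · rintro rfl
      exact Or.inr ⟨rfl, hv⟩
  rw [hns, card_singleton]

lemma iso_of_isStarAt (n : ℕ) (hcard : Fintype.card V = n) (G : SimpleGraph V)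
    {c : V} (h : IsStarAt G c) :
    Nonempty (G ≃g completeBipartiteGraph (Fin 1) (Fin (n - 1))) := by
  classical
  have h1 : Fintype.card {v : V // v = c} = 1 := Fintype.card_subtype_eq c
  have h2 : Fintype.card {v : V // ¬ v = c} = n - 1 := by
    rw [Fintype.card_subtype_compl, Fintype.card_subtype_eq, hcard]
  let e1 : {v : V // v = c} ≃ Fin 1 := Fintype.equivFinOfCardEq h1
  let e2 : {v : V // ¬ v = c} ≃ Fin (n - 1) := Fintype.equivFinOfCardEq h2
  let φ : V ≃ (Fin 1 ⊕ Fin (n - 1)) :=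
    (Equiv.sumCompl (· = c)).symm.trans (Equiv.sumCongr e1 e2)
  refine ⟨⟨φ, ?_⟩⟩
  intro u v
  rw [h]
  by_cases hu : u = c <;> by_cases hv : v = c <;>
    simp [φ, Equiv.sumCompl_symm_apply_of_pos, Equiv.sumCompl_symm_apply_of_neg,
      hu, hv]

lemma isStarAt_of_iso (n : ℕ) (hcard : Fintype.card V = n) (G : SimpleGraph V)
    (φ : G ≃g completeBipartiteGraph (Fin 1) (Fin (n - 1))) :
    ∃ c, IsStarAt G c := by
  refine ⟨φ.symm (Sum.inl 0), fun u v => ?_⟩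
  have hP : ∀ w : V, φ w = Sum.inl 0 ↔ w = φ.symm (Sum.inl 0) := by
    intro w
    constructor
    · intro hw
      rw [← hw]
      simp
    · intro hw
      rw [hw]
      simp
  have hPL : ∀ (w : V) (a : Fin 1), φ w = Sum.inl a → w = φ.symm (Sum.inl 0) := by
    intro w a hw
    apply (hP w).mp
    rw [hw]
    exact congrArg Sum.inl (Subsingleton.elim a 0)
  have hPR : ∀ (w : V) (b : Fin (n - 1)), φ w = Sum.inr b →
      ¬ w = φ.symm (Sum.inl 0) := by
    intro w b hw hc
    have := (hP w).mpr hc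
    rw [hw] at this
    simp at this
  rw [← φ.map_rel_iff, ← hP u, ← hP v]
  rcases hfu : φ u with a | a <;> rcases hfv : φ v with b | b
  · simp [hPL u a hfu, hPL v b hfv, eq_iff_true_of_subsingleton]
  · simp [hPL u a hfu, hPR v b hfv, eq_iff_true_of_subsingleton]
  · simp [hPR u a hfu, hPL v b hfv, eq_iff_true_of_subsingleton]
  · simp [hPR u a hfu, hPR v b hfv, eq_iff_true_of_subsingleton]

end Aux

/-- For a tree `T` on `n ≥ 3` vertices, `σ(T) ≤ (n−1)(n−2)²`, with equality iff
`T` is isomorphic to the star `S_n = K_{1,n−1}`. -/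
theorem sigmaIndex_tree_le (n : ℕ) (hn : 3 ≤ n) {V : Type*} [Fintype V]
    (hcard : Fintype.card V = n) (T : SimpleGraph V) (hT : T.IsTree) :
    sigmaIndex T ≤ ((n : ℤ) - 1) * ((n : ℤ) - 2) ^ 2 ∧
      (sigmaIndex T = ((n : ℤ) - 1) * ((n : ℤ) - 2) ^ 2 ↔
        Nonempty (T ≃g completeBipartiteGraph (Fin 1) (Fin (n - 1)))) := by
  classical
  set B : ℤ := ((n : ℤ) - 2) ^ 2 with hB
  set F : Sym2 V → ℤ :=
    fun e => Sym2.lift ⟨fun u v => ((T.degree u : ℤ) - (T.degree v : ℤ)) ^ 2,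
      fun u v => by ring⟩ e with hF
  have hsig : sigmaIndex T = ∑ e ∈ T.edgeFinset, F e := sigmaIndex_eq_sum T
  have hdeglt : ∀ v : V, (T.degree v : ℤ) ≤ (n : ℤ) - 1 := by
    intro v
    have h := T.degree_lt_card_verts v
    rw [hcard] at h
    push_cast
    omega
  have hdegpos : ∀ {u v : V}, T.Adj u v → 1 ≤ (T.degree u : ℤ) := by
    intro u v huv
    have h : 0 < T.degree u := by
      rw [← SimpleGraph.card_neighborFinset_eq_degree]
      exact card_pos.mpr ⟨v, (SimpleGraph.mem_neighborFinset _ _ _).mpr huv⟩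
    exact_mod_cast h
  have hcardE : T.edgeFinset.card = n - 1 := by have := hT.card_edgeFinset; omega
  have hcastE : (T.edgeFinset.card : ℤ) = (n : ℤ) - 1 := by
    rw [hcardE]
    push_cast
    omega
  have hterm : ∀ e ∈ T.edgeFinset, F e ≤ B := by
    intro e he
    induction e using Sym2.ind with
    | _ u v =>
      rw [SimpleGraph.mem_edgeFinset, SimpleGraph.mem_edgeSet] at he
      simp only [hF, Sym2.lift_mk]
      have h1 := hdeglt u
      have h2 := hdeglt v
      have h3 := hdegpos he
      have h4 := hdegpos he.symm
      apply sq_le_sq' <;> linarith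
  have hle : ∑ e ∈ T.edgeFinset, F e ≤ ((n : ℤ) - 1) * B := by
    calc ∑ e ∈ T.edgeFinset, F e ≤ ∑ _e ∈ T.edgeFinset, B := Finset.sum_le_sum hterm
      _ = (T.edgeFinset.card : ℤ) * B := by rw [Finset.sum_const, nsmul_eq_mul]
      _ = ((n : ℤ) - 1) * B := by rw [hcastE]
  -- the "star implies equality" direction
  have star_eq : ∀ c : V, IsStarAt T c →
      sigmaIndex T = ((n : ℤ) - 1) * ((n : ℤ) - 2) ^ 2 := by
    intro c hstar
    have hterm' : ∀ e ∈ T.edgeFinset, F e = B := by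
      intro e he
      induction e using Sym2.ind with
      | _ u v =>
        rw [SimpleGraph.mem_edgeFinset, SimpleGraph.mem_edgeSet] at he
        simp only [hF, Sym2.lift_mk]
        have hcc : (T.degree c : ℤ) = (n : ℤ) - 1 := by
          rw [hstar.degree_center, hcard]
          push_cast
          omega
        rcases (hstar u v).mp he with ⟨rfl, hv⟩ | ⟨rfl, hu⟩
        · rw [hstar.degree_leaf hv, hcc, hB]
          push_cast
          ring
        · rw [hstar.degree_leaf hu, hcc, hB]
          push_cast
          ring
    rw [hsig, Finset.sum_congr rfl hterm', Finset.sum_const, nsmul_eq_mul, hcastE, hB]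
  refine ⟨by rw [hsig]; exact hle, ?_, ?_⟩
  · -- equality → star → iso
    intro heq
    have hsum_eq : ∑ e ∈ T.edgeFinset, F e = ((n : ℤ) - 1) * B := by
      rw [← hsig, heq, hB]
    have hall : ∀ e ∈ T.edgeFinset, F e = B := by
      by_contra hcon
      push_neg at hcon
      obtain ⟨e, he, hne⟩ := hcon
      have hlt : ∑ e ∈ T.edgeFinset, F e < ∑ _e ∈ T.edgeFinset, B :=
        Finset.sum_lt_sum hterm ⟨e, he, lt_of_le_of_ne (hterm e he) hne⟩
      rw [Finset.sum_const, nsmul_eq_mul, hcastE] at hlt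
      omega
    have key : ∀ u v : V, T.Adj u v →
        ((T.degree u : ℤ) = (n : ℤ) - 1 ∧ (T.degree v : ℤ) = 1) ∨
        ((T.degree v : ℤ) = (n : ℤ) - 1 ∧ (T.degree u : ℤ) = 1) := by
      intro u v huv
      have he : s(u, v) ∈ T.edgeFinset := by
        rw [SimpleGraph.mem_edgeFinset, SimpleGraph.mem_edgeSet]
        exact huv
      have heq' := hall _ he
      simp only [hF, Sym2.lift_mk, hB] at heq'
      have h1 := hdeglt u
      have h2 := hdeglt v
      have h3 := hdegpos huv
      have h4 := hdegpos huv.symm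
      have hz : (((T.degree u : ℤ) - (T.degree v : ℤ)) - ((n : ℤ) - 2)) *
          (((T.degree u : ℤ) - (T.degree v : ℤ)) + ((n : ℤ) - 2)) = 0 := by
        linear_combination heq'
      rcases mul_eq_zero.mp hz with hz | hz
      · exact Or.inl ⟨by linarith, by linarith⟩
      · exact Or.inr ⟨by linarith, by linarith⟩
    have full_adj : ∀ x : V, (T.degree x : ℤ) = (n : ℤ) - 1 →
        ∀ w : V, w ≠ x → T.Adj x w := by
      intro x hx w hw
      have hdx : T.degree x = n - 1 := by omega
      have hsub : T.neighborFinset x ⊆ univ.erase x := by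
        intro y hy
        exact mem_erase.mpr
          ⟨(T.ne_of_adj ((SimpleGraph.mem_neighborFinset _ _ _).mp hy)).symm, mem_univ y⟩
      have hc2 : (univ.erase x).card ≤ (T.neighborFinset x).card := by
        rw [card_erase_of_mem (mem_univ x), card_univ, hcard,
          SimpleGraph.card_neighborFinset_eq_degree, hdx]
      have heqset := Finset.eq_of_subset_of_card_le hsub hc2
      have hwmem : w ∈ T.neighborFinset x := by
        rw [heqset]
        exact mem_erase.mpr ⟨hw, mem_univ w⟩
      exact (SimpleGraph.mem_neighborFinset _ _ _).mp hwmem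
    obtain ⟨u0, v0, huv0⟩ : ∃ u v : V, T.Adj u v := by
      obtain ⟨e, he⟩ : T.edgeFinset.Nonempty := by
        rw [← Finset.card_pos, hcardE]
        omega
      induction e using Sym2.ind with
      | _ u v =>
        rw [SimpleGraph.mem_edgeFinset, SimpleGraph.mem_edgeSet] at he
        exact ⟨u, v, he⟩
    obtain ⟨c, hc⟩ : ∃ c : V, (T.degree c : ℤ) = (n : ℤ) - 1 := by
      rcases key u0 v0 huv0 with ⟨h1, _⟩ | ⟨h1, _⟩
      · exact ⟨u0, h1⟩
      · exact ⟨v0, h1⟩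
    have hstar : IsStarAt T c := by
      intro u v
      constructor
      · intro huv
        by_cases hu : u = c
        · subst hu
          exact Or.inl ⟨rfl, fun hv => T.irrefl (hv ▸ huv)⟩
        · by_cases hv : v = c
          · subst hv
            exact Or.inr ⟨rfl, hu⟩
          · exfalso
            rcases key u v huv with ⟨h1, _⟩ | ⟨h1, _⟩
            · have hadj : T.Adj u c := full_adj u h1 c (Ne.symm hu)
              rcases key u c hadj with ⟨_, hc1⟩ | ⟨_, hc1⟩ <;> omega
            · have hadj : T.Adj v c := full_adj v h1 c (Ne.symm hv)
              rcases key v c hadj with ⟨_, hc1⟩ | ⟨_, hc1⟩ <;> omega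
      · rintro (⟨rfl, hv⟩ | ⟨rfl, hu⟩)
        · exact full_adj u hc v hv
        · exact (full_adj v hc u hu).symm
    exact iso_of_isStarAt n hcard T hstar
  · -- iso → equality
    rintro ⟨φ⟩
    obtain ⟨c, hstar⟩ := isStarAt_of_iso n hcard T φ
    exact star_eq c hstar
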